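/- Let p₁ and p₂ be distinct odd primes, n an integer, and let χ₁, χ₂, χ₃ be Dirichlet characters modulo p₁. Then |B(p₁, (1, p₁², p₂², n); χ₁, χ₂, χ₃)| ≤ 4 · gcd(n, p₁)^{1/2} · p₁^{3/2} / (p₁−1)². -/

import Mathlib

/-!
With `ψ` the standard additive character of `ZMod p`, `S(χ, a)` is the twisted quadratic sum
`V(χ⁻¹, a) = ∑ x, χ⁻¹ x ψ (a x²)`. For `b = (1, p², p₂², n)` the second factor is the constant
`V(χ₂⁻¹, 0)` of size at most `p - 1`, and since `p₂²` is a nonzero square the third factor is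
`χ₃(p₂) V(χ₃⁻¹, a)`. So `|B|` is at most `(p - 1)⁻²` times the correlation
`T(M) = ∑_{a ≠ 0} V(χ, a) V(χ', a) ψ(a M)` at `M = -n`.

Orthogonality of `ψ` gives the second moment `∑ u, |V(u)|² ≤ 2p(p - 1)`, and Cauchy–Schwarz
bounds `T(M)` by the same quantity, which suffices when `p ∣ n`. When `M ≠ 0`, write `a = c²` or
`a = γ c²` with `γ` a fixed nonsquare: as `V(u c²) = χ(c⁻¹) V(u)`, the sum over `c` collapses to
`2 T(M) = V(1) V'(1) V_λ(M) + V(γ) V'(γ) V_λ(γ M)` with `λ = (χ χ')⁻¹`. Spreading the second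
moment over the `p - 1` points `u c²` gives `|V(u)|² + |V(γ u)|² ≤ 4p`, and Hölder's inequality
for two-term sums yields `|T(M)| ≤ 4 p^{3/2}`.
-/

/-- `S(χ,a) = ∑_{h=1}^{q} conj(χ)(h) e_q(a h²)` for a Dirichlet character χ mod q. -/
noncomputable def Schar {q : ℕ} (χ : DirichletCharacter ℂ q) (a : ℤ) : ℂ :=
  ∑ h ∈ Finset.Icc 1 q,
    (starRingEnd ℂ) (χ (h : ZMod q)) *
      Complex.exp (2 * (Real.pi : ℂ) * Complex.I * ((a : ℂ) * (h : ℂ) ^ 2) / (q : ℂ))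

/-- `B(q, (b₁,b₂,b₃,b₄); χ₁, χ₂, χ₃)
  = φ(q)⁻³ ∑_{1 ≤ a ≤ q, gcd(a,q)=1} S(χ₁,ab₁) S(χ₂,ab₂) S(χ₃,ab₃) e_q(−ab₄)`. -/
noncomputable def Bsum (q : ℕ) (b₁ b₂ b₃ b₄ : ℤ) (χ₁ χ₂ χ₃ : DirichletCharacter ℂ q) : ℂ :=
  ((q.totient : ℂ))⁻¹ ^ 3 *
    ∑ a ∈ (Finset.Icc 1 q).filter (fun a => Nat.gcd a q = 1),
      Schar χ₁ ((a : ℤ) * b₁) * Schar χ₂ ((a : ℤ) * b₂) * Schar χ₃ ((a : ℤ) * b₃) *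
        Complex.exp (-(2 * (Real.pi : ℂ) * Complex.I * ((a : ℂ) * (b₄ : ℂ)) / (q : ℂ)))

open Finset

theorem mul_mul_add_mul_mul_le_mul_sqrt {A x X y Y z Z : ℝ} (hx : x ^ 2 + X ^ 2 ≤ A)
    (hy : y ^ 2 + Y ^ 2 ≤ A) (hz : z ^ 2 + Z ^ 2 ≤ A) :
    x * y * z + X * Y * Z ≤ A * √A := by
  have hA : 0 ≤ A := (by positivity : (0 : ℝ) ≤ x ^ 2 + X ^ 2).trans hx
  have hyz : (y * z) ^ 2 + (Y * Z) ^ 2 ≤ A * A :=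
    calc (y * z) ^ 2 + (Y * Z) ^ 2 ≤ (y ^ 2 + Y ^ 2) * (z ^ 2 + Z ^ 2) := by
          nlinarith [sq_nonneg (y * Z), sq_nonneg (Y * z)]
      _ ≤ A * A := mul_le_mul hy hz (by positivity) hA
  have hsq : (x * y * z + X * Y * Z) ^ 2 ≤ A ^ 2 * A :=
    calc (x * y * z + X * Y * Z) ^ 2 ≤ (x ^ 2 + X ^ 2) * ((y * z) ^ 2 + (Y * Z) ^ 2) := by
          nlinarith [sq_nonneg (x * (Y * Z) - X * (y * z))]
      _ ≤ A * (A * A) := mul_le_mul hx hyz (by positivity) hA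
      _ = A ^ 2 * A := by ring
  calc x * y * z + X * Y * Z ≤ |x * y * z + X * Y * Z| := le_abs_self _
    _ ≤ √(A ^ 2 * A) := Real.abs_le_sqrt hsq
    _ = A * √A := by rw [Real.sqrt_mul (sq_nonneg A), Real.sqrt_sq hA]

theorem cast_card_univ_erase {α : Type*} [Fintype α] [DecidableEq α] {a : α} :
    ((univ.erase a).card : ℝ) = Fintype.card α - 1 := by
  rw [card_erase_of_mem (mem_univ _), card_univ, Nat.cast_sub (Fintype.card_pos_iff.mpr ⟨a⟩),
    Nat.cast_one]

noncomputable def twistedQuadSum {R : Type*} [CommRing R] [Fintype R] (χ : MulChar R ℂ)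
    (ψ : AddChar R ℂ) (u : R) : ℂ :=
  ∑ x, χ x * ψ (u * x ^ 2)

noncomputable def twistedQuadPairSum {R : Type*} [CommRing R] [Fintype R] [DecidableEq R]
    (χ χ' : MulChar R ℂ) (ψ : AddChar R ℂ) (M : R) : ℂ :=
  ∑ a ∈ univ.erase 0, twistedQuadSum χ ψ a * twistedQuadSum χ' ψ a * ψ (a * M)

section FiniteField

variable {F : Type*} [Field F] [Fintype F] (χ : MulChar F ℂ) (ψ : AddChar F ℂ)

theorem norm_mulChar_apply_eq_one {x : F} (hx : x ≠ 0) : ‖χ x‖ = 1 := by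
  refine (pow_eq_one_iff_of_nonneg (n := Fintype.card F - 1) (norm_nonneg _)
    (by have := Fintype.one_lt_card (α := F); omega)).mp ?_
  rw [← norm_pow, ← map_pow, FiniteField.pow_card_sub_one_eq_one x hx, map_one, norm_one]

theorem norm_mulChar_apply_le_one (x : F) : ‖χ x‖ ≤ 1 := by
  rcases eq_or_ne x 0 with rfl | hx
  · rw [MulChar.map_zero, norm_zero]; exact zero_le_one
  · exact (norm_mulChar_apply_eq_one χ hx).le

theorem sum_norm_mulChar_apply : ∑ x, ‖χ x‖ = Fintype.card F - 1 := by
  classical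
  rw [← add_sum_erase _ _ (mem_univ 0), MulChar.map_zero, norm_zero, zero_add,
    sum_congr rfl fun x hx => norm_mulChar_apply_eq_one χ (ne_of_mem_erase hx),
    sum_const, nsmul_one, cast_card_univ_erase]

theorem twistedQuadSum_mul_sq (u : F) {c : F} (hc : c ≠ 0) :
    twistedQuadSum χ ψ (u * c ^ 2) = χ c⁻¹ * twistedQuadSum χ ψ u := by
  rw [twistedQuadSum, twistedQuadSum, mul_sum,
    ← Equiv.sum_comp (Equiv.mulLeft₀ c⁻¹ (inv_ne_zero hc))]
  refine sum_congr rfl fun x _ => ?_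
  rw [Equiv.mulLeft₀_apply, map_mul, mul_pow, ← mul_assoc, mul_assoc u, ← mul_pow,
    mul_inv_cancel₀ hc, one_pow, mul_one, mul_assoc]

theorem norm_twistedQuadSum_mul_sq (u : F) {c : F} (hc : c ≠ 0) :
    ‖twistedQuadSum χ ψ (u * c ^ 2)‖ = ‖twistedQuadSum χ ψ u‖ := by
  rw [twistedQuadSum_mul_sq χ ψ u hc, norm_mul,
    norm_mulChar_apply_eq_one χ (inv_ne_zero hc), one_mul]

theorem norm_twistedQuadSum_le (u : F) : ‖twistedQuadSum χ ψ u‖ ≤ Fintype.card F - 1 := by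
  rw [← sum_norm_mulChar_apply χ]
  refine (norm_sum_le _ _).trans (sum_le_sum fun x _ => ?_)
  rw [norm_mul, AddChar.norm_apply, mul_one]

variable [DecidableEq F]

theorem sum_apply_sq_eq_sum_quadraticChar_smul (hF : ringChar F ≠ 2) {M : Type*}
    [AddCommGroup M] (G : F → M) :
    ∑ c, G (c ^ 2) = ∑ w, (quadraticChar F w + 1) • G w := by
  rw [← Finset.sum_fiberwise univ (· ^ 2)]
  refine sum_congr rfl fun w _ => ?_
  rw [← quadraticChar_card_sqrts hF, Set.toFinset_ofPred, natCast_zsmul]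
  exact sum_eq_card_nsmul fun c hc => by rw [(mem_filter.mp hc).2]

theorem sum_apply_sq_add_apply_nonsquare_mul_sq (hF : ringChar F ≠ 2) {γ : F}
    (hγ : ¬IsSquare γ) {M : Type*} [AddCommGroup M] (G : F → M) :
    ∑ c, (G (c ^ 2) + G (γ * c ^ 2)) = 2 • ∑ w, G w := by
  have hγ0 : γ ≠ 0 := by rintro rfl; exact hγ IsSquare.zero
  have hχγ : quadraticChar F γ = -1 := quadraticChar_neg_one_iff_not_isSquare.mpr hγ
  have hshift : ∑ c, G (γ * c ^ 2) = ∑ w, (1 - quadraticChar F w) • G w := by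
    rw [sum_apply_sq_eq_sum_quadraticChar_smul hF (G <| γ * ·),
      ← Equiv.sum_comp (Equiv.mulLeft₀ γ hγ0) fun w => (1 - quadraticChar F w) • G w]
    refine sum_congr rfl fun w _ => ?_
    simp only [Equiv.mulLeft₀_apply, map_mul, hχγ]
    congr 1
    ring
  rw [sum_add_distrib, sum_apply_sq_eq_sum_quadraticChar_smul hF, hshift, ← sum_add_distrib,
    smul_sum]
  refine sum_congr rfl fun w _ => ?_
  rw [← add_smul, ← natCast_zsmul]
  congr 1
  push_cast
  ring

theorem sum_erase_zero_apply_sq_add_apply_nonsquare_mul_sq (hF : ringChar F ≠ 2) {γ : F}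
    (hγ : ¬IsSquare γ) {M : Type*} [AddCommGroup M] (G : F → M) :
    ∑ c ∈ univ.erase 0, (G (c ^ 2) + G (γ * c ^ 2)) = 2 • ∑ w ∈ univ.erase 0, G w := by
  rw [sum_erase_eq_sub (mem_univ _), sum_erase_eq_sub (mem_univ _),
    sum_apply_sq_add_apply_nonsquare_mul_sq hF hγ, smul_sub]
  simp [two_nsmul]

theorem sum_norm_twistedQuadSum_sq (hψ : ψ.IsPrimitive) :
    ((∑ u, ‖twistedQuadSum χ ψ u‖ ^ 2 : ℝ) : ℂ) =
      Fintype.card F * ∑ x, χ x * ∑ y with y ^ 2 = x ^ 2, starRingEnd ℂ (χ y) := by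
  have expand (u : F) : (‖twistedQuadSum χ ψ u‖ ^ 2 : ℂ) =
      ∑ x, ∑ y, χ x * starRingEnd ℂ (χ y) * ψ (u * (x ^ 2 - y ^ 2)) := by
    rw [← Complex.mul_conj', twistedQuadSum, map_sum, sum_mul_sum]
    refine sum_congr rfl fun x _ => sum_congr rfl fun y _ => ?_
    rw [map_mul (starRingEnd ℂ), ← AddChar.map_neg_eq_conj, mul_sub, sub_eq_add_neg,
      AddChar.map_add_eq_mul]
    ring
  push_cast
  simp_rw [expand]
  rw [sum_comm, mul_sum]
  refine sum_congr rfl fun x _ => ?_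
  rw [sum_comm, mul_sum, mul_sum, sum_filter]
  refine sum_congr rfl fun y _ => ?_
  rw [← mul_sum, AddChar.sum_mulShift _ hψ]
  simp only [sub_eq_zero, eq_comm (a := x ^ 2)]
  split_ifs <;> push_cast <;> ring

theorem sum_norm_twistedQuadSum_sq_le (hF : ringChar F ≠ 2) (hψ : ψ.IsPrimitive) :
    ∑ u, ‖twistedQuadSum χ ψ u‖ ^ 2 ≤ 2 * Fintype.card F * (Fintype.card F - 1) := by
  have hroots (x : F) (hx : x ≠ 0) : #{y | y ^ 2 = x ^ 2} = 2 := by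
    have h := quadraticChar_card_sqrts hF (x ^ 2)
    rw [quadraticChar_sq_one' hx, Set.toFinset_ofPred] at h
    exact_mod_cast h
  have hinner (x : F) : ‖χ x * ∑ y with y ^ 2 = x ^ 2, starRingEnd ℂ (χ y)‖ ≤ 2 * ‖χ x‖ := by
    rcases eq_or_ne x 0 with rfl | hx
    · simp [MulChar.map_zero]
    rw [norm_mul, mul_comm]
    refine mul_le_mul_of_nonneg_right ?_ (norm_nonneg _)
    calc ‖∑ y with y ^ 2 = x ^ 2, starRingEnd ℂ (χ y)‖
        ≤ ∑ y with y ^ 2 = x ^ 2, (1 : ℝ) := norm_sum_le_of_le _ fun y _ => by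
          rw [Complex.norm_conj]; exact norm_mulChar_apply_le_one χ y
      _ = 2 := by rw [sum_const, hroots x hx]; norm_num
  calc ∑ u, ‖twistedQuadSum χ ψ u‖ ^ 2
      = ‖((∑ u, ‖twistedQuadSum χ ψ u‖ ^ 2 : ℝ) : ℂ)‖ := by
        rw [Complex.norm_real, Real.norm_of_nonneg (by positivity)]
    _ ≤ Fintype.card F * ∑ x, 2 * ‖χ x‖ := by
        rw [sum_norm_twistedQuadSum_sq χ ψ hψ, norm_mul, Complex.norm_natCast]
        gcongr
        exact (norm_sum_le _ _).trans (sum_le_sum fun x _ => hinner x)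
    _ = 2 * Fintype.card F * (Fintype.card F - 1) := by
        rw [← mul_sum, sum_norm_mulChar_apply]; ring

theorem norm_twistedQuadSum_sq_add_nonsquare_mul_sq_le (hF : ringChar F ≠ 2)
    (hψ : ψ.IsPrimitive) {u γ : F} (hu : u ≠ 0) (hγ : ¬IsSquare γ) :
    ‖twistedQuadSum χ ψ u‖ ^ 2 + ‖twistedQuadSum χ ψ (γ * u)‖ ^ 2 ≤ 4 * Fintype.card F := by
  set G : F → ℝ := fun w => ‖twistedQuadSum χ ψ (u * w)‖ ^ 2
  have hq : (0 : ℝ) < Fintype.card F - 1 := by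
    have : (1 : ℝ) < Fintype.card F := by exact_mod_cast Fintype.one_lt_card
    linarith
  have hlhs : ∑ c ∈ univ.erase 0, (G (c ^ 2) + G (γ * c ^ 2)) =
      (Fintype.card F - 1) * (‖twistedQuadSum χ ψ u‖ ^ 2 + ‖twistedQuadSum χ ψ (γ * u)‖ ^ 2) := by
    rw [← cast_card_univ_erase, ← nsmul_eq_mul, ← sum_const]
    refine sum_congr rfl fun c hc => ?_
    have hc0 := ne_of_mem_erase hc
    simp only [G, ← mul_assoc, mul_comm u γ, norm_twistedQuadSum_mul_sq χ ψ _ hc0]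
  have hrhs : ∑ w ∈ univ.erase 0, G w ≤ 2 * Fintype.card F * (Fintype.card F - 1) :=
    calc ∑ w ∈ univ.erase 0, G w ≤ ∑ w, G w :=
          sum_le_sum_of_subset_of_nonneg (subset_univ _) fun _ _ _ => by positivity
      _ = ∑ w, ‖twistedQuadSum χ ψ w‖ ^ 2 :=
          Equiv.sum_comp (Equiv.mulLeft₀ u hu) fun w => ‖twistedQuadSum χ ψ w‖ ^ 2
      _ ≤ _ := sum_norm_twistedQuadSum_sq_le χ ψ hF hψ
  have hcount := sum_erase_zero_apply_sq_add_apply_nonsquare_mul_sq hF hγ G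
  rw [hlhs, nsmul_eq_mul, Nat.cast_ofNat] at hcount
  refine le_of_mul_le_mul_left ?_ hq
  linarith

theorem two_mul_twistedQuadPairSum (χ' : MulChar F ℂ) (M : F) (hF : ringChar F ≠ 2) {γ : F}
    (hγ : ¬IsSquare γ) :
    2 * twistedQuadPairSum χ χ' ψ M =
      twistedQuadSum χ ψ 1 * twistedQuadSum χ' ψ 1 * twistedQuadSum (χ * χ')⁻¹ ψ M +
        twistedQuadSum χ ψ γ * twistedQuadSum χ' ψ γ * twistedQuadSum (χ * χ')⁻¹ ψ (γ * M) := by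
  set h : F → ℂ := fun a => twistedQuadSum χ ψ a * twistedQuadSum χ' ψ a * ψ (a * M)
  have hfibre (u : F) : ∑ c ∈ univ.erase 0, h (u * c ^ 2) =
      twistedQuadSum χ ψ u * twistedQuadSum χ' ψ u * twistedQuadSum (χ * χ')⁻¹ ψ (u * M) := by
    have hzero : ∑ c ∈ univ.erase 0, (χ * χ')⁻¹ c * ψ (u * M * c ^ 2) =
        twistedQuadSum (χ * χ')⁻¹ ψ (u * M) :=
      sum_erase _ (by rw [MulChar.map_zero, zero_mul])
    rw [← hzero, mul_sum]
    refine sum_congr rfl fun c hc => ?_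
    simp only [h, twistedQuadSum_mul_sq _ ψ u (ne_of_mem_erase hc), MulChar.inv_apply',
      MulChar.mul_apply]
    ring_nf
  have hcount := sum_erase_zero_apply_sq_add_apply_nonsquare_mul_sq hF hγ h
  rw [sum_add_distrib, nsmul_eq_mul, Nat.cast_ofNat] at hcount
  rw [twistedQuadPairSum, ← hcount, ← hfibre γ, ← one_mul M, ← hfibre 1]
  simp only [one_mul]

theorem norm_twistedQuadPairSum_le (χ' : MulChar F ℂ) (M : F) (hF : ringChar F ≠ 2)
    (hψ : ψ.IsPrimitive) :
    ‖twistedQuadPairSum χ χ' ψ M‖ ≤ 2 * Fintype.card F * (Fintype.card F - 1) :=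
  calc ‖twistedQuadPairSum χ χ' ψ M‖
      ≤ ∑ a ∈ univ.erase 0, ‖twistedQuadSum χ ψ a‖ * ‖twistedQuadSum χ' ψ a‖ :=
        norm_sum_le_of_le _ fun a _ => by rw [norm_mul, norm_mul, AddChar.norm_apply, mul_one]
    _ ≤ ∑ a, ‖twistedQuadSum χ ψ a‖ * ‖twistedQuadSum χ' ψ a‖ :=
        sum_le_sum_of_subset_of_nonneg (subset_univ _) fun _ _ _ => by positivity
    _ ≤ √(∑ a, ‖twistedQuadSum χ ψ a‖ ^ 2) * √(∑ a, ‖twistedQuadSum χ' ψ a‖ ^ 2) :=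
        Real.sum_mul_le_sqrt_mul_sqrt _ _ _
    _ ≤ √(2 * Fintype.card F * (Fintype.card F - 1)) *
          √(2 * Fintype.card F * (Fintype.card F - 1)) := by
        gcongr <;> exact sum_norm_twistedQuadSum_sq_le _ ψ hF hψ
    _ = 2 * Fintype.card F * (Fintype.card F - 1) := by
        refine Real.mul_self_sqrt ?_
        have : (1 : ℝ) ≤ Fintype.card F := by exact_mod_cast Fintype.card_pos
        positivity

theorem norm_twistedQuadPairSum_le_of_ne_zero (χ' : MulChar F ℂ) {M : F} (hM : M ≠ 0)
    (hF : ringChar F ≠ 2) (hψ : ψ.IsPrimitive) :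
    ‖twistedQuadPairSum χ χ' ψ M‖ ≤ 4 * Fintype.card F * √(Fintype.card F) := by
  obtain ⟨γ, hγ⟩ := FiniteField.exists_nonsquare hF
  have hpair (η : MulChar F ℂ) {u : F} (hu : u ≠ 0) :=
    norm_twistedQuadSum_sq_add_nonsquare_mul_sq_le η ψ hF hψ hu hγ
  have h1 := hpair χ one_ne_zero
  have h2 := hpair χ' one_ne_zero
  rw [mul_one] at h1 h2
  have hholder := mul_mul_add_mul_mul_le_mul_sqrt h1 h2 (hpair (χ * χ')⁻¹ hM)
  have hsqrt : √(4 * (Fintype.card F : ℝ)) = 2 * √(Fintype.card F) := by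
    rw [Real.sqrt_mul zero_le_four, show (4 : ℝ) = 2 ^ 2 by norm_num, Real.sqrt_sq zero_le_two]
  have h2T : 2 * ‖twistedQuadPairSum χ χ' ψ M‖ ≤ 4 * Fintype.card F * (2 * √(Fintype.card F)) :=
    calc 2 * ‖twistedQuadPairSum χ χ' ψ M‖ = ‖2 * twistedQuadPairSum χ χ' ψ M‖ := by
          rw [norm_mul, Complex.norm_two]
      _ ≤ _ := by
          rw [two_mul_twistedQuadPairSum χ ψ χ' M hF hγ, ← hsqrt]
          refine (norm_add_le _ _).trans ?_
          simpa only [norm_mul] using hholder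
  linarith

end FiniteField

section ZMod

variable {q : ℕ} [NeZero q]

theorem sum_Icc_natCast_eq_sum {M : Type*} [AddCommMonoid M] (f : ZMod q → M) :
    ∑ h ∈ Icc 1 q, f h = ∑ x, f x := by
  refine sum_nbij' (fun h => (h : ZMod q)) (fun x => (x - 1).val + 1) (fun _ _ => mem_univ _)
    (fun x _ => mem_Icc.mpr ⟨Nat.le_add_left 1 _, ZMod.val_lt (x - 1)⟩) (fun h hh => ?_)
    (fun x _ => by simp) fun _ _ => rfl
  obtain ⟨h1, h2⟩ := mem_Icc.mp hh
  rw [show (h : ZMod q) - 1 = ((h - 1 : ℕ) : ZMod q) by rw [Nat.cast_sub h1, Nat.cast_one],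
    ZMod.val_cast_of_lt (by omega)]
  omega

theorem sum_Icc_coprime_eq_sum_isUnit {M : Type*} [AddCommMonoid M] (f : ZMod q → M) :
    ∑ a ∈ Icc 1 q with a.gcd q = 1, f a = ∑ x with IsUnit x, f x := by
  rw [sum_filter, sum_filter, ← sum_Icc_natCast_eq_sum fun x => if IsUnit x then f x else 0]
  simp only [ZMod.isUnit_iff_coprime, Nat.Coprime]

theorem Schar_eq_twistedQuadSum (χ : DirichletCharacter ℂ q) (a : ℤ) :
    Schar χ a = twistedQuadSum χ⁻¹ ZMod.stdAddChar (a : ZMod q) := by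
  rw [Schar, twistedQuadSum, ← sum_Icc_natCast_eq_sum]
  refine sum_congr rfl fun h _ => ?_
  rw [← MulChar.star_apply', ← Int.cast_natCast (R := ZMod q) h, ← Int.cast_pow, ← Int.cast_mul,
    ZMod.stdAddChar_coe]
  push_cast
  rfl

theorem Bsum_eq_sum_isUnit (b₁ b₂ b₃ b₄ : ℤ) (χ₁ χ₂ χ₃ : DirichletCharacter ℂ q) :
    Bsum q b₁ b₂ b₃ b₄ χ₁ χ₂ χ₃ = (q.totient : ℂ)⁻¹ ^ 3 * ∑ x : ZMod q with IsUnit x,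
      twistedQuadSum χ₁⁻¹ ZMod.stdAddChar (x * (b₁ : ZMod q)) *
        twistedQuadSum χ₂⁻¹ ZMod.stdAddChar (x * (b₂ : ZMod q)) *
        twistedQuadSum χ₃⁻¹ ZMod.stdAddChar (x * (b₃ : ZMod q)) *
        ZMod.stdAddChar (-(x * (b₄ : ZMod q))) := by
  rw [Bsum, ← sum_Icc_coprime_eq_sum_isUnit]
  refine congrArg _ (sum_congr rfl fun a _ => ?_)
  have hexp : Complex.exp (-(2 * Real.pi * Complex.I * (a * b₄) / q)) =
      ZMod.stdAddChar (-((a : ZMod q) * (b₄ : ZMod q))) := by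
    rw [show -((a : ZMod q) * (b₄ : ZMod q)) = ((-(a * b₄) : ℤ) : ZMod q) by push_cast; rfl,
      ZMod.stdAddChar_coe]
    push_cast
    ring_nf
  simp only [Schar_eq_twistedQuadSum, hexp, Int.cast_mul, Int.cast_natCast]

end ZMod

section Prime

variable {p : ℕ} [Fact p.Prime]

theorem Bsum_eq_twistedQuadPairSum (m n : ℤ) (hm : (m : ZMod p) ≠ 0)
    (χ₁ χ₂ χ₃ : DirichletCharacter ℂ p) :
    Bsum p 1 ((p : ℤ) ^ 2) (m ^ 2) n χ₁ χ₂ χ₃ = (p.totient : ℂ)⁻¹ ^ 3 *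
      (twistedQuadSum χ₂⁻¹ ZMod.stdAddChar 0 * χ₃⁻¹ (m : ZMod p)⁻¹ *
        twistedQuadPairSum χ₁⁻¹ χ₃⁻¹ ZMod.stdAddChar ((-n : ℤ) : ZMod p)) := by
  rw [Bsum_eq_sum_isUnit, twistedQuadPairSum]
  congr 1
  rw [mul_sum]
  simp only [isUnit_iff_ne_zero, filter_ne', Int.cast_one, Int.cast_neg, Int.cast_pow,
    Int.cast_natCast, ZMod.natCast_self, mul_one, zero_pow two_ne_zero, mul_zero,
    twistedQuadSum_mul_sq _ _ _ hm]
  refine sum_congr rfl fun x _ => ?_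
  rw [neg_mul_eq_mul_neg]
  ring

theorem norm_Bsum_le (m n : ℤ) (hm : (m : ZMod p) ≠ 0) (χ₁ χ₂ χ₃ : DirichletCharacter ℂ p) :
    ‖Bsum p 1 ((p : ℤ) ^ 2) (m ^ 2) n χ₁ χ₂ χ₃‖ ≤
      ‖twistedQuadPairSum χ₁⁻¹ χ₃⁻¹ ZMod.stdAddChar ((-n : ℤ) : ZMod p)‖ / (p - 1) ^ 2 := by
  have hp : (0 : ℝ) < p - 1 := by
    have : (1 : ℝ) < p := by exact_mod_cast (Fact.out : p.Prime).one_lt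
    linarith
  have hV := norm_twistedQuadSum_le χ₂⁻¹ ZMod.stdAddChar 0
  rw [ZMod.card] at hV
  rw [Bsum_eq_twistedQuadPairSum _ _ hm, norm_mul, norm_mul, norm_mul,
    norm_mulChar_apply_eq_one _ (inv_ne_zero hm), mul_one, norm_pow, norm_inv,
    Complex.norm_natCast, Nat.totient_prime Fact.out, Nat.cast_pred (Fact.out : p.Prime).pos]
  calc ((p : ℝ) - 1)⁻¹ ^ 3 * (‖twistedQuadSum χ₂⁻¹ ZMod.stdAddChar 0‖ *
        ‖twistedQuadPairSum χ₁⁻¹ χ₃⁻¹ ZMod.stdAddChar ((-n : ℤ) : ZMod p)‖)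
      ≤ ((p : ℝ) - 1)⁻¹ ^ 3 * ((p - 1) *
          ‖twistedQuadPairSum χ₁⁻¹ χ₃⁻¹ ZMod.stdAddChar ((-n : ℤ) : ZMod p)‖) := by
        gcongr
    _ = _ := by field_simp

theorem norm_twistedQuadPairSum_intCast_le (hp : p ≠ 2) (χ χ' : MulChar (ZMod p) ℂ) (n : ℤ) :
    ‖twistedQuadPairSum χ χ' ZMod.stdAddChar (n : ZMod p)‖ ≤ 4 * √(n.gcd p) * (p * √p) := by
  have hF : ringChar (ZMod p) ≠ 2 := by rwa [ZMod.ringChar_zmod_n]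
  have hψ := ZMod.isPrimitive_stdAddChar p
  have hq : (Fintype.card (ZMod p) : ℝ) = p := by rw [ZMod.card]
  rcases eq_or_ne (n : ZMod p) 0 with hn | hn
  · have hgcd : n.gcd p = p := by
      exact_mod_cast Int.gcd_eq_right (Int.natCast_nonneg p)
        ((ZMod.intCast_zmod_eq_zero_iff_dvd n p).mp hn)
    have hpp : √p * (p * √p) = p * p := by
      rw [mul_left_comm, Real.mul_self_sqrt (by positivity)]
    calc ‖twistedQuadPairSum χ χ' ZMod.stdAddChar (n : ZMod p)‖
        ≤ 2 * p * (p - 1) := by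
          simpa only [hq] using norm_twistedQuadPairSum_le χ _ χ' _ hF hψ
      _ ≤ 4 * √(n.gcd p) * (p * √p) := by
          rw [hgcd, mul_assoc 4, hpp]
          nlinarith
  · have hgcd : (1 : ℝ) ≤ √(n.gcd p) := by
      rw [Real.one_le_sqrt]
      exact_mod_cast Int.gcd_pos_of_ne_zero_right _
        (by exact_mod_cast (Fact.out : p.Prime).ne_zero)
    calc ‖twistedQuadPairSum χ χ' ZMod.stdAddChar (n : ZMod p)‖
        ≤ 4 * p * √p := by
          simpa only [hq] using norm_twistedQuadPairSum_le_of_ne_zero χ _ χ' hn hF hψ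
      _ ≤ 4 * √(n.gcd p) * (p * √p) := by
          rw [mul_assoc]
          have : 0 ≤ p * √p := by positivity
          nlinarith

end Prime

theorem Bsum_bound_case2_general (p₁ p₂ : ℕ) (hp₁ : p₁.Prime) (hp₂ : p₂.Prime)
    (hodd₁ : Odd p₁) (hne : p₁ ≠ p₂)
    (n : ℤ) (χ₁ χ₂ χ₃ : DirichletCharacter ℂ p₁) :
    ‖Bsum p₁ 1 ((p₁ : ℤ) ^ 2) ((p₂ : ℤ) ^ 2) n χ₁ χ₂ χ₃‖
      ≤ 4 * Real.sqrt (Int.gcd n (p₁ : ℤ)) * (p₁ : ℝ) ^ ((3 : ℝ) / 2) /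
          ((p₁ : ℝ) - 1) ^ 2 := by
  have := Fact.mk hp₁
  have hp₁2 : p₁ ≠ 2 := by rintro rfl; exact absurd hodd₁ (by decide)
  have hp₂0 : ((p₂ : ℤ) : ZMod p₁) ≠ 0 := by
    rw [Int.cast_natCast, Ne, ZMod.natCast_eq_zero_iff]
    exact fun h => hne ((Nat.prime_dvd_prime_iff_eq hp₁ hp₂).mp h)
  have hrpow : (p₁ : ℝ) ^ ((3 : ℝ) / 2) = p₁ * √p₁ := by
    rw [show (3 : ℝ) / 2 = 1 + 1 / 2 by norm_num, Real.rpow_add (by exact_mod_cast hp₁.pos),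
      Real.rpow_one, Real.sqrt_eq_rpow]
  calc ‖Bsum p₁ 1 ((p₁ : ℤ) ^ 2) ((p₂ : ℤ) ^ 2) n χ₁ χ₂ χ₃‖
      ≤ ‖twistedQuadPairSum χ₁⁻¹ χ₃⁻¹ ZMod.stdAddChar ((-n : ℤ) : ZMod p₁)‖ / (p₁ - 1) ^ 2 :=
        norm_Bsum_le _ _ hp₂0 χ₁ χ₂ χ₃
    _ ≤ 4 * √(n.gcd p₁) * (p₁ * √p₁) / (p₁ - 1) ^ 2 := by
        gcongr
        simpa only [Int.neg_gcd] using norm_twistedQuadPairSum_intCast_le hp₁2 χ₁⁻¹ χ₃⁻¹ (-n)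
    _ = _ := by rw [hrpow]

/-- For distinct odd primes p₁, p₂, n ∈ ℤ and Dirichlet characters χ₁, χ₂, χ₃ mod p₁:
`|B(p₁, (1,p₁²,p₂²,n); χ₁, χ₂, χ₃)| ≤ 4 gcd(n,p₁)^{1/2} p₁^{3/2}/(p₁−1)²`. -/
theorem Bsum_bound_case2 (p₁ p₂ : ℕ) (hp₁ : p₁.Prime) (hp₂ : p₂.Prime)
    (hodd₁ : Odd p₁) (hodd₂ : Odd p₂) (hne : p₁ ≠ p₂)
    (n : ℤ) (χ₁ χ₂ χ₃ : DirichletCharacter ℂ p₁) :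
    ‖Bsum p₁ 1 ((p₁ : ℤ) ^ 2) ((p₂ : ℤ) ^ 2) n χ₁ χ₂ χ₃‖
      ≤ 4 * Real.sqrt (Int.gcd n (p₁ : ℤ)) * (p₁ : ℝ) ^ ((3 : ℝ) / 2) /
          ((p₁ : ℝ) - 1) ^ 2 :=
  Bsum_bound_case2_general p₁ p₂ hp₁ hp₂ hodd₁ hne n χ₁ χ₂ χ₃
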